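/- arXiv:2310.09569 — 2 statements merged into one kernel-verified Lean document; each statement's English description precedes it below -/
import Mathlib

section
/- Let r and s be coprime integers with 1 < r < s. Then the inversion set Inv(π₁ π₅⁻¹) contains the inversion set Inv(π₅⁻¹). -/
/-- The inversion set of a permutation of `{1, ..., s}`:
pairs `(i, j)` with `1 ≤ i < j ≤ s` and `π i > π j`. -/
def invSet (s : ℕ) (π : Equiv.Perm ℕ) : Set (ℕ × ℕ) :=
  {p : ℕ × ℕ | 1 ≤ p.1 ∧ p.1 < p.2 ∧ p.2 ≤ s ∧ π p.2 < π p.1}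

/-! π₅⁻¹ fixes `{1, …, r}` pointwise and maps `{r+1, …, s}` into itself, so both entries of any
of its inversions, and their images, lie in `{r+1, …, s}`, where π₁ is the identity. -/

lemma add_card_filter_mem_Icc {r s i : ℕ} {p : ℕ → Prop} [DecidablePred p]
    (hi : i ∈ Set.Icc (r + 1) s) (hpi : p i) :
    r + ((Finset.Icc (r + 1) s).filter p).card ∈ Set.Icc (r + 1) s := by
  have hpos : 0 < ((Finset.Icc (r + 1) s).filter p).card :=
    Finset.card_pos.mpr ⟨i, Finset.mem_filter.mpr ⟨Finset.mem_Icc.mpr hi, hpi⟩⟩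
  have hle : ((Finset.Icc (r + 1) s).filter p).card ≤ s + 1 - (r + 1) :=
    (Finset.card_filter_le _ _).trans (Nat.card_Icc _ _).le
  constructor <;> omega

section invSet

variable {r s : ℕ} {σ τ : Equiv.Perm ℕ}

lemma lt_fst_of_mem_invSet (hfix : ∀ i, 1 ≤ i → i ≤ r → σ i = i)
    (hmaps : Set.MapsTo σ (Set.Icc (r + 1) s) (Set.Icc (r + 1) s))
    {p : ℕ × ℕ} (hp : p ∈ invSet s σ) : r < p.1 := by
  obtain ⟨h1, h12, h2s, hinv⟩ := hp
  by_contra! h1r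
  rw [hfix p.1 h1 h1r] at hinv
  by_cases h2r : p.2 ≤ r
  · rw [hfix p.2 (by omega) h2r] at hinv
    omega
  · have := (hmaps ⟨(by omega : r + 1 ≤ p.2), h2s⟩).1
    omega

theorem invSet_subset_invSet_mul (hfix : ∀ i, 1 ≤ i → i ≤ r → σ i = i)
    (hmaps : Set.MapsTo σ (Set.Icc (r + 1) s) (Set.Icc (r + 1) s))
    (hτ : ∀ i, r + 1 ≤ i → i ≤ s → τ i = i) :
    invSet s σ ⊆ invSet s (τ * σ) := by
  intro p hp
  have hr1 := lt_fst_of_mem_invSet hfix hmaps hp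
  obtain ⟨h1, h12, h2s, hinv⟩ := hp
  obtain ⟨hσ1, hσ1s⟩ := hmaps ⟨(by omega : r + 1 ≤ p.1), (by omega : p.1 ≤ s)⟩
  obtain ⟨hσ2, hσ2s⟩ := hmaps ⟨(by omega : r + 1 ≤ p.2), h2s⟩
  refine ⟨h1, h12, h2s, ?_⟩
  rwa [Equiv.Perm.mul_apply, Equiv.Perm.mul_apply, hτ _ hσ1 hσ1s, hτ _ hσ2 hσ2s]

end invSet

theorem stmt_10_general
    (r s : ℕ)
    (π₁ : Equiv.Perm ℕ)
    (hπ₁₂ : ∀ i : ℕ, r + 1 ≤ i → i ≤ s → π₁ i = i)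
    (π₃ : Equiv.Perm ℕ)
    (π₅ : Equiv.Perm ℕ)
    (hπ₅₁ : ∀ i : ℕ, 1 ≤ i → i ≤ r → π₅⁻¹ i = i)
    (hπ₅₂ : ∀ i : ℕ, r + 1 ≤ i → i ≤ s →
      π₅⁻¹ i = r + ((Finset.Icc (r + 1) s).filter (fun j => π₃⁻¹ j ≤ π₃⁻¹ i)).card) :
    invSet s π₅⁻¹ ⊆ invSet s (π₁ * π₅⁻¹) := by
  have hmaps : Set.MapsTo (π₅⁻¹ : Equiv.Perm ℕ) (Set.Icc (r + 1) s) (Set.Icc (r + 1) s) := fun i hi => by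
    rw [hπ₅₂ i hi.1 hi.2]
    exact add_card_filter_mem_Icc hi le_rfl
  exact invSet_subset_invSet_mul hπ₅₁ hmaps hπ₁₂

theorem stmt_10
    (r s : ℕ) (hr : 1 < r) (hrs : r < s) (hco : Nat.Coprime r s)
    (π₁ : Equiv.Perm ℕ)
    (hπ₁₁ : ∀ i : ℕ, 1 ≤ i → i ≤ r → π₁ i = r + 1 - i)
    (hπ₁₂ : ∀ i : ℕ, r + 1 ≤ i → i ≤ s → π₁ i = i)
    (hπ₁₃ : ∀ i : ℕ, i = 0 ∨ s < i → π₁ i = i)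
    (π₃ : Equiv.Perm ℕ)
    (hπ₃₁ : ∀ i : ℕ, 1 ≤ i → i ≤ s → 1 ≤ π₃ i ∧ π₃ i ≤ s ∧ π₃ i % s = (r * i) % s)
    (hπ₃₂ : ∀ i : ℕ, i = 0 ∨ s < i → π₃ i = i)
    (π₅ : Equiv.Perm ℕ)
    (hπ₅₁ : ∀ i : ℕ, 1 ≤ i → i ≤ r → π₅⁻¹ i = i)
    (hπ₅₂ : ∀ i : ℕ, r + 1 ≤ i → i ≤ s →
      π₅⁻¹ i = r + ((Finset.Icc (r + 1) s).filter (fun j => π₃⁻¹ j ≤ π₃⁻¹ i)).card)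
    (hπ₅₃ : ∀ i : ℕ, i = 0 ∨ s < i → π₅ i = i) :
    invSet s π₅⁻¹ ⊆ invSet s (π₁ * π₅⁻¹) :=
  stmt_10_general r s π₁ hπ₁₂ π₃ π₅ hπ₅₁ hπ₅₂
end

section
/- Let r and s be coprime integers with 1 < r < s. For every integer i with s - ⌊s/r⌋ + 1 ≤ i ≤ s, one has (π₆⁻¹ π₁⁻¹ π₅⁻¹ π₃)(i) = i, i.e. π₆⁻¹(π₁⁻¹(π₅⁻¹(π₃(i)))) = i. -/
/-! For `i` in the top block `s - ⌊s/r⌋ < i ≤ s`, write `i = s - t` with `t < ⌊s/r⌋`. Then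
`r * i ≡ s - r * t (mod s)` and `r < s - r * t ≤ s`, so `π₃ i = s - r * t`: multiplication by `r`
maps the top block increasingly into `{r+1, …, s}`, and `π₃` sends everything above `i` into
`{r+1, …, s}` as well. Hence exactly `s - i` elements `j` of `{r+1, …, s}` have `π₃⁻¹ j > i`, so
`π₅⁻¹ (π₃ i) = r + (s - r) - (s - i) = i`. Since `i > r`, both `π₁` and `π₆` fix `i`. -/

open Finset

theorem Nat.eq_of_modEq_of_mem_Icc {a b s : ℕ} (h : a ≡ b [MOD s]) (ha : a ∈ Icc 1 s)
    (hb : b ∈ Icc 1 s) : a = b := by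
  rw [mem_Icc] at ha hb
  exact h.eq_of_abs_lt (abs_sub_lt_iff.2 ⟨by omega, by omega⟩)

theorem Nat.mul_add_lt_of_lt_div_of_not_dvd {r s t : ℕ} (ht : t < s / r) (h : ¬ r ∣ s) :
    r * t + r < s :=
  calc r * t + r = r * (t + 1) := by ring
    _ ≤ r * (s / r) := Nat.mul_le_mul_left r ht
    _ < s := Nat.mul_div_lt_iff_not_dvd.2 h

theorem apply_eq_sub_mul_of_sub_lt_div {r s : ℕ} {f : ℕ → ℕ}
    (hf : ∀ i, 1 ≤ i → i ≤ s → 1 ≤ f i ∧ f i ≤ s ∧ f i % s = r * i % s)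
    {k : ℕ} (hk : s - k < s / r) (hks : k ≤ s) : f k = s - r * (s - k) := by
  have hrk : r * (s - k) + r ≤ s :=
    (Nat.mul_succ r _).symm ▸ (Nat.mul_le_mul_left r hk).trans (Nat.mul_div_le s r)
  have hr : 0 < r := Nat.pos_of_ne_zero (by rintro rfl; simp at hk)
  obtain ⟨h₁, h₂, h₃⟩ := hf k (by have := Nat.div_le_self s r; omega) hks
  have hsum : r * k + r * (s - k) ≡ s - r * (s - k) + r * (s - k) [MOD s] := by
    rw [← mul_add, Nat.add_sub_cancel' hks, Nat.sub_add_cancel (by omega)]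
    exact (Nat.modEq_zero_iff_dvd.2 (dvd_mul_left s r)).trans
      (Nat.modEq_zero_iff_dvd.2 dvd_rfl).symm
  refine Nat.eq_of_modEq_of_mem_Icc (h₃.trans (Nat.ModEq.add_right_cancel' _ hsum))
    (mem_Icc.2 ⟨h₁, h₂⟩) (mem_Icc.2 ⟨by omega, by omega⟩)

theorem add_card_filter_inv_le {r s i : ℕ} {σ : Equiv.Perm ℕ} (hσ : ∀ k, s < k → σ k = k)
    (hmaps : ∀ k ∈ Icc (i + 1) s, σ k ∈ Icc (r + 1) s) (hri : r ≤ i) (his : i ≤ s) :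
    r + #{j ∈ Icc (r + 1) s | σ⁻¹ j ≤ i} = i := by
  have hcompl : {j ∈ Icc (r + 1) s | ¬ σ⁻¹ j ≤ i} = (Icc (i + 1) s).map σ.toEmbedding := by
    ext j
    simp only [mem_filter, mem_map_equiv, Equiv.Perm.inv_def, not_le]
    constructor
    · rintro ⟨hj, hij⟩
      have : σ.symm j ≤ s := by
        by_contra! hs
        have := hσ _ hs
        rw [Equiv.apply_symm_apply] at this
        simp only [mem_Icc] at hj
        omega
      exact mem_Icc.2 ⟨hij, this⟩
    · intro hj
      have hj' := mem_Icc.1 hj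
      exact ⟨by simpa using hmaps _ hj, by omega⟩
  have := card_filter_add_card_filter_not (s := Icc (r + 1) s) (p := fun j => σ⁻¹ j ≤ i)
  rw [hcompl, card_map, Nat.card_Icc, Nat.card_Icc] at this
  omega

theorem stmt_19_general
    (r s : ℕ) (hr : 1 < r) (hco : Nat.Coprime r s)
    (π₁ : Equiv.Perm ℕ)
    (hπ₁₂ : ∀ i : ℕ, r + 1 ≤ i → i ≤ s → π₁ i = i)
    (π₃ : Equiv.Perm ℕ)
    (hπ₃₁ : ∀ i : ℕ, 1 ≤ i → i ≤ s → 1 ≤ π₃ i ∧ π₃ i ≤ s ∧ π₃ i % s = (r * i) % s)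
    (hπ₃₂ : ∀ i : ℕ, i = 0 ∨ s < i → π₃ i = i)
    (π₅ : Equiv.Perm ℕ)
    (hπ₅₂ : ∀ i : ℕ, r + 1 ≤ i → i ≤ s →
      π₅⁻¹ i = r + ((Finset.Icc (r + 1) s).filter (fun j => π₃⁻¹ j ≤ π₃⁻¹ i)).card)
    (π₆ : Equiv.Perm ℕ)
    (hπ₆₂ : ∀ i : ℕ, r + 1 ≤ i → i ≤ s → π₆⁻¹ i = i) :
    ∀ i : ℕ, s - s / r + 1 ≤ i → i ≤ s →
      π₆⁻¹ (π₁⁻¹ (π₅⁻¹ (π₃ i))) = i := by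
  intro i hi his
  have hndvd : ¬ r ∣ s := fun h => by have := hco.eq_one_of_dvd h; omega
  have htop : ∀ k, s - k < s / r → k ≤ s → π₃ k ∈ Icc (r + 1) s := by
    intro k hk hks
    have := Nat.mul_add_lt_of_lt_div_of_not_dvd hk hndvd
    rw [apply_eq_sub_mul_of_sub_lt_div hπ₃₁ hk hks, mem_Icc]
    omega
  have hri : r < i := by
    have := Nat.mul_add_lt_of_lt_div_of_not_dvd (show s - i < s / r by omega) hndvd
    have : s - i ≤ r * (s - i) := Nat.le_mul_of_pos_left _ (by omega)
    omega
  have h₅ : π₅⁻¹ (π₃ i) = i := by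
    obtain ⟨h₁, h₂⟩ := mem_Icc.1 (htop i (by omega) his)
    rw [hπ₅₂ _ h₁ h₂, show π₃⁻¹ (π₃ i) = i from Equiv.Perm.inv_eq_iff_eq.2 rfl]
    exact add_card_filter_inv_le (fun k hk => hπ₃₂ k (Or.inr hk))
      (fun k hk => htop k (by simp only [mem_Icc] at hk; omega) (mem_Icc.1 hk).2) hri.le his
  have h₁ : π₁⁻¹ i = i := by rw [Equiv.Perm.inv_eq_iff_eq, hπ₁₂ i hri his]
  rw [h₅, h₁, hπ₆₂ i hri his]

theorem stmt_19
    (r s : ℕ) (hr : 1 < r) (hrs : r < s) (hco : Nat.Coprime r s)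
    (π₁ : Equiv.Perm ℕ)
    (hπ₁₁ : ∀ i : ℕ, 1 ≤ i → i ≤ r → π₁ i = r + 1 - i)
    (hπ₁₂ : ∀ i : ℕ, r + 1 ≤ i → i ≤ s → π₁ i = i)
    (hπ₁₃ : ∀ i : ℕ, i = 0 ∨ s < i → π₁ i = i)
    (π₃ : Equiv.Perm ℕ)
    (hπ₃₁ : ∀ i : ℕ, 1 ≤ i → i ≤ s → 1 ≤ π₃ i ∧ π₃ i ≤ s ∧ π₃ i % s = (r * i) % s)
    (hπ₃₂ : ∀ i : ℕ, i = 0 ∨ s < i → π₃ i = i)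
    (π₅ : Equiv.Perm ℕ)
    (hπ₅₁ : ∀ i : ℕ, 1 ≤ i → i ≤ r → π₅⁻¹ i = i)
    (hπ₅₂ : ∀ i : ℕ, r + 1 ≤ i → i ≤ s →
      π₅⁻¹ i = r + ((Finset.Icc (r + 1) s).filter (fun j => π₃⁻¹ j ≤ π₃⁻¹ i)).card)
    (hπ₅₃ : ∀ i : ℕ, i = 0 ∨ s < i → π₅ i = i)
    (π₆ : Equiv.Perm ℕ)
    (hπ₆₁ : ∀ i : ℕ, 1 ≤ i → i ≤ r →
      π₆⁻¹ i = ((Finset.Icc 1 r).filter (fun j => π₃⁻¹ j ≤ π₃⁻¹ i)).card)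
    (hπ₆₂ : ∀ i : ℕ, r + 1 ≤ i → i ≤ s → π₆⁻¹ i = i)
    (hπ₆₃ : ∀ i : ℕ, i = 0 ∨ s < i → π₆ i = i) :
    ∀ i : ℕ, s - s / r + 1 ≤ i → i ≤ s →
      π₆⁻¹ (π₁⁻¹ (π₅⁻¹ (π₃ i))) = i :=
  stmt_19_general r s hr hco π₁ hπ₁₂ π₃ hπ₃₁ hπ₃₂ π₅ hπ₅₂ π₆ hπ₆₂
end
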